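/- Let F be a field, let x₁, …, x_g be pairwise distinct elements of F, let y₁, …, y_g be nonzero elements of F, and let ξ₁, …, ξ_g ∈ F. Let U(z) = ∏_{j=1}^g (z − x_j). For i = 1, …, g set F_i = ∑_{j=1}^g x_j^{i−1} ξ_j / y_j, let D(z) = ∑_{i=1}^g F_i z^{g+1−i}, write U(z)·D(z) = ∑_{k=0}^{2g} q_k z^k, and define Q(z) = ∑_{k=0}^{g−1} q_{g+1+k} z^k. Let V ∈ F[z] be a polynomial with V(x_j) = y_j for all j. Then U' is invertible modulo U, and the unique polynomial T of degree at most g−1 with T ≡ Q·V·(U')^{−1} (mod U) satisfies T(x_j) = ξ_j for every j = 1, …, g; that is, T interpolates the data {(x_j, ξ_j)}. -/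

import Mathlib

/-!
Write `c m = ξ m / y m` and `U_m = U / (X - x m)`. Swapping the two sums in `D` and using the
geometric sum `(X - a) * ∑_{i<g} a^i X^(g-i) = X^(g+1) - a^g X` gives
`U * D = (∑ c m • U_m) * X^(g+1) - (a polynomial of degree ≤ g)`, so `Q = ∑ c m • U_m`.
At a node `x j` only the `j`-th summand survives and `U_j (x j) = U' (x j)`, hence
`T (x j) = Q (x j) V (x j) / U' (x j) = c j * y j = ξ j`.
-/

open Polynomial Finset Lagrange

namespace Polynomial

variable {R : Type*}

theorem Separable.exists_dvd_derivative_mul_sub_one [CommRing R] {p : R[X]} (hp : p.Separable) :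
    ∃ S, p ∣ derivative p * S - 1 := by
  obtain ⟨a, b, hab⟩ := hp
  exact ⟨b, -a, by linear_combination hab⟩

theorem eval_eq_of_dvd_sub [CommRing R] {p f g : R[X]} {a : R} (hp : p.IsRoot a) (h : p ∣ f - g) :
    f.eval a = g.eval a := by
  rw [← sub_eq_zero, ← eval_sub]
  exact eval_eq_zero_of_dvd_of_eval_eq_zero h hp

theorem X_sub_C_mul_sum_C_pow_mul_X_pow [CommRing R] (a : R) (n : ℕ) :
    (X - C a) * ∑ i ∈ range n, C a ^ i * X ^ (n - i) = X ^ (n + 1) - C a ^ n * X := by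
  have hshift : ∑ i ∈ range n, C a ^ i * X ^ (n - i) =
      X * ∑ i ∈ range n, C a ^ i * X ^ (n - 1 - i) := by
    rw [mul_sum]
    refine sum_congr rfl fun i hi => ?_
    rw [show n - i = n - 1 - i + 1 by rw [mem_range] at hi; omega, pow_succ]
    ring
  rw [hshift]
  linear_combination (-X : R[X]) * geom_sum₂_mul (C a) (X : R[X]) n

theorem sum_range_C_coeff_mul_X_pow_add [Semiring R] {A B : R[X]} {m n : ℕ}
    (hA : A.degree < m) (hB : B.degree < n) :
    ∑ k ∈ range m, C ((A * X ^ n + B).coeff (n + k)) * X ^ k = A := by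
  have hcoeff (k : ℕ) : (A * X ^ n + B).coeff (n + k) = A.coeff k := by
    rw [coeff_add, add_comm n k, coeff_mul_X_pow,
      coeff_eq_zero_of_degree_lt (hB.trans_le (by exact_mod_cast Nat.le_add_left n k)), add_zero]
  simp_rw [hcoeff, C_mul_X_pow_eq_monomial]
  rcases eq_or_ne A 0 with rfl | hA0
  · simp
  · exact (A.as_sum_range' m ((natDegree_lt_iff_degree_lt hA0).2 hA)).symm

end Polynomial

namespace Lagrange

variable {R : Type*} [CommRing R] {ι : Type*}

theorem nodal_separable {F : Type*} [Field F] {s : Finset ι} {v : ι → F} (hvs : Set.InjOn v s) :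
    (nodal s v).Separable :=
  separable_prod_X_sub_C_iff'.2 fun _ hi _ hj hij => hvs hi hj hij

variable [DecidableEq ι]

theorem degree_sum_C_mul_nodal_erase_lt [Nontrivial R] (s : Finset ι) (v c : ι → R) :
    (∑ j ∈ s, C (c j) * nodal (s.erase j) v).degree < #s := by
  rw [← mem_degreeLT]
  refine Submodule.sum_mem _ fun j hj => ?_
  rw [← smul_eq_C_mul]
  refine Submodule.smul_mem _ _ (mem_degreeLT.2 ?_)
  rw [degree_nodal, card_erase_of_mem hj]
  exact_mod_cast Nat.sub_lt (card_pos.2 ⟨j, hj⟩) one_pos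

theorem eval_sum_C_mul_nodal_erase {s : Finset ι} (v c : ι → R) {i : ι} (hi : i ∈ s) :
    (∑ j ∈ s, C (c j) * nodal (s.erase j) v).eval (v i) =
      c i * (derivative (nodal s v)).eval (v i) := by
  rw [eval_finsetSum, sum_eq_single_of_mem i hi, eval_nodal_derivative_eval_node_eq hi, eval_mul,
    eval_C]
  intro j _ hji
  rw [eval_mul, eval_nodal_at_node (mem_erase.2 ⟨hji.symm, hi⟩), mul_zero]

theorem nodal_mul_sum_C_sum_pow_mul_X_pow (s : Finset ι) (v c : ι → R) :
    nodal s v * ∑ i ∈ range #s, C (∑ j ∈ s, v j ^ i * c j) * X ^ (#s - i) =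
      (∑ j ∈ s, C (c j) * nodal (s.erase j) v) * X ^ (#s + 1) -
        (∑ j ∈ s, C (c j * v j ^ #s) * nodal (s.erase j) v) * X := by
  have hswap : ∑ i ∈ range #s, C (∑ j ∈ s, v j ^ i * c j) * X ^ (#s - i) =
      ∑ j ∈ s, C (c j) * ∑ i ∈ range #s, C (v j) ^ i * X ^ (#s - i) := by
    simp_rw [map_sum, sum_mul, mul_sum]
    rw [sum_comm]
    refine sum_congr rfl fun j _ => sum_congr rfl fun i _ => ?_
    rw [map_mul, map_pow]
    ring
  rw [hswap, mul_sum, sum_mul, sum_mul, ← sum_sub_distrib]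
  refine sum_congr rfl fun j hj => ?_
  rw [nodal_eq_mul_nodal_erase hj, map_mul, map_pow]
  linear_combination C (c j) * nodal (s.erase j) v * X_sub_C_mul_sum_C_pow_mul_X_pow (v j) #s

theorem sum_range_C_coeff_nodal_mul [Nontrivial R] (s : Finset ι) (v c : ι → R) :
    ∑ k ∈ range #s, C ((nodal s v * ∑ i ∈ range #s,
        C (∑ j ∈ s, v j ^ i * c j) * X ^ (#s - i)).coeff (#s + 1 + k)) * X ^ k =
      ∑ j ∈ s, C (c j) * nodal (s.erase j) v := by
  rw [nodal_mul_sum_C_sum_pow_mul_X_pow, sub_eq_add_neg]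
  refine sum_range_C_coeff_mul_X_pow_add (degree_sum_C_mul_nodal_erase_lt s v c) ?_
  rw [degree_neg, degree_mul_X]
  have := degree_sum_C_mul_nodal_erase_lt s v (fun j => c j * v j ^ #s)
  exact_mod_cast WithBot.add_lt_add_right WithBot.one_ne_bot this

end Lagrange

/-- Let `F` be a field, `x₁, …, x_g` pairwise distinct, `y₁, …, y_g` nonzero,
`ξ₁, …, ξ_g ∈ F`, and `U(z) = ∏ (z − x_j)`. With `F_i = ∑_j x_j^{i−1} ξ_j / y_j`,
`D(z) = ∑_{i=1}^g F_i z^{g+1−i}`, `U·D = ∑_{k=0}^{2g} q_k z^k`,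
`Q(z) = ∑_{k=0}^{g−1} q_{g+1+k} z^k`, and `V` a polynomial with `V(x_j) = y_j` for all `j`:
the derivative `U'` is invertible modulo `U` (there is `S` with `U'·S ≡ 1 (mod U)`), and the
unique polynomial `T` of degree at most `g − 1` with `T ≡ Q·V·(U')⁻¹ (mod U)` satisfies
`T(x_j) = ξ_j` for every `j`. (Indices are 0-based: `F i = ∑_j x_j^i ξ_j / y_j` and the
corresponding monomial in `D` is `z^(g−i)`; `(U')⁻¹` is represented by any `S` inverting `U'`
modulo `U`.) -/
theorem T_interpolates_xi
    (F : Type*) [Field F] (g : ℕ)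
    (x : Fin g → F) (hx : Function.Injective x)
    (y : Fin g → F) (hy : ∀ j, y j ≠ 0)
    (ξ : Fin g → F)
    (U : F[X]) (hU : U = ∏ j : Fin g, (X - C (x j)))
    (Fc : Fin g → F) (hFc : ∀ i : Fin g, Fc i = ∑ j : Fin g, x j ^ (i : ℕ) * ξ j / y j)
    (D : F[X]) (hD : D = ∑ i : Fin g, C (Fc i) * X ^ (g - (i : ℕ)))
    (Q : F[X]) (hQ : Q = ∑ k ∈ Finset.range g, C ((U * D).coeff (g + 1 + k)) * X ^ k)
    (V : F[X]) (hV : ∀ j, V.eval (x j) = y j) :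
    (∃ S : F[X], U ∣ derivative U * S - 1) ∧
      ∀ S T : F[X], U ∣ derivative U * S - 1 → T.degree < g →
        U ∣ T - Q * V * S → ∀ j : Fin g, T.eval (x j) = ξ j := by
  replace hU : U = nodal univ x := hU.trans (nodal_eq univ x).symm
  have hUsep : U.Separable := hU ▸ nodal_separable hx.injOn
  refine ⟨hUsep.exists_dvd_derivative_mul_sub_one, fun S T hS _ hTQ j => ?_⟩
  have hQ' : Q = ∑ m, C (ξ m / y m) * nodal (univ.erase m) x := by
    have h := sum_range_C_coeff_nodal_mul univ x (fun m => ξ m / y m)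
    simp only [card_univ, Fintype.card_fin] at h
    rw [hQ, ← h, hU, hD]
    simp_rw [hFc, mul_div_assoc]
    rw [Fin.sum_univ_eq_sum_range (fun i => C (∑ m, x m ^ i * (ξ m / y m)) * X ^ (g - i))]
  have hroot : U.IsRoot (x j) := hU ▸ eval_nodal_at_node (mem_univ j)
  have hT : T.eval (x j) = Q.eval (x j) * y j * S.eval (x j) := by
    rw [eval_eq_of_dvd_sub hroot hTQ, eval_mul, eval_mul, hV]
  have hS' : (derivative U).eval (x j) * S.eval (x j) = 1 := by
    rw [← eval_mul, eval_eq_of_dvd_sub hroot hS, eval_one]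
  rw [hT, hQ', eval_sum_C_mul_nodal_erase x _ (mem_univ j), ← hU]
  field_simp [hy j]
  linear_combination ξ j * hS'
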